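/- arXiv:0901.1365 — 4 statements merged into one kernel-verified Lean document; each statement's English description precedes it below -/
import Mathlib

section
/- Let A be a symmetric positive Hilbert–Schmidt operator with simple nonzero eigenvalues λ₁ > λ₂ > ⋯, let D > 0 be an integer with λ_D > 0, and set δ_D = (λ_D − λ_{D+1})/2. Let B be a symmetric Hilbert–Schmidt operator with ‖B‖_F ≤ δ_D/2 such that A + B is positive. Then ‖P^D(A) − P^D(A+B)‖_F ≤ ‖B‖_F/δ_D, where P^D(M) is the orthogonal projector onto the span of the first D eigenvectors of M. -/
open Matrix

noncomputable def frobNorm {p q : ℕ} (M : Matrix (Fin p) (Fin q) ℝ) : ℝ :=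
  Real.sqrt (∑ i, ∑ j, (M i j)^2)

/-!
Write `U`, `W` for the orthogonal matrices whose rows are the eigenvectors `u i` of `A` and
`w j` of `A + B`, `C = U Wᵀ` for their overlap matrix and `E` for the coordinate projection onto
the index set `T`. Conjugating by `U, W`, which preserves Frobenius norms, turns the difference
`P - Q` of the projectors into the commutator `E C - C E`, and `B` into `C diag ν - diag μ C`,
with entries `(ν j - μ i) C i j`. The first has squared norm the mass `S` of `C` on the block
`T × Tᶜ` plus that on `Tᶜ × T`, and the two are equal because `C` is orthogonal. On these blocks
`|ν j - μ i|` is at least `a`, resp. `b`, where `a + b ≥ 2δ` by the eigengaps, so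
`‖B‖² ≥ (a⁺² + b⁺²) S ≥ 2δ² S = δ² ‖P - Q‖²`.
-/

open Finset

namespace ZwaldBlanchard

variable {m n : Type*} [Fintype m] [Fintype n]

lemma of_mul_transpose_eq_one [DecidableEq n] {u : n → n → ℝ}
    (hu : ∀ i j, u i ⬝ᵥ u j = if i = j then 1 else 0) : of u * (of u)ᵀ = 1 := by
  ext i j
  simpa [mul_apply, one_apply, dotProduct] using hu i j

lemma sum_sq_eq_trace_mul_transpose (M : Matrix m n ℝ) :
    ∑ i, ∑ j, M i j ^ 2 = trace (M * Mᵀ) := by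
  simp [trace, mul_apply, sq]

lemma sum_sq_conj_orthogonal [DecidableEq m] [DecidableEq n] {U : Matrix m m ℝ} {V : Matrix n n ℝ}
    (hU : Uᵀ * U = 1) (hV : Vᵀ * V = 1) (M : Matrix m n ℝ) :
    ∑ i, ∑ j, (U * M * Vᵀ) i j ^ 2 = ∑ i, ∑ j, M i j ^ 2 := by
  rw [sum_sq_eq_trace_mul_transpose, sum_sq_eq_trace_mul_transpose]
  calc trace (U * M * Vᵀ * (U * M * Vᵀ)ᵀ) = trace (Uᵀ * U * M * (Vᵀ * V) * Mᵀ) := by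
        simp only [transpose_mul, transpose_transpose, ← Matrix.mul_assoc]
        rw [trace_mul_comm]
        simp only [← Matrix.mul_assoc]
    _ = trace (M * Mᵀ) := by rw [hU, hV, Matrix.one_mul, Matrix.mul_one]

lemma sum_sum_eq_blocks [DecidableEq n] (T : Finset n) (F : n → n → ℝ) :
    ∑ i, ∑ j, F i j = ∑ i ∈ T, ∑ j ∈ T, F i j + ∑ i ∈ T, ∑ j ∈ Tᶜ, F i j
      + ∑ i ∈ Tᶜ, ∑ j ∈ T, F i j + ∑ i ∈ Tᶜ, ∑ j ∈ Tᶜ, F i j := by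
  simp only [← sum_add_sum_compl T, sum_add_distrib]
  ring

lemma sum_sq_block_symm_of_orthogonal [DecidableEq n] {C : Matrix n n ℝ} (h : C * Cᵀ = 1)
    (h' : Cᵀ * C = 1) (T : Finset n) :
    ∑ i ∈ T, ∑ j ∈ Tᶜ, C i j ^ 2 = ∑ i ∈ Tᶜ, ∑ j ∈ T, C i j ^ 2 := by
  have hrow : ∀ i, ∑ j, C i j ^ 2 = 1 := fun i => by
    simpa [mul_apply, sq] using congrFun (congrFun h i) i
  have hcol : ∀ j, ∑ i, C i j ^ 2 = 1 := fun j => by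
    simpa [mul_apply, sq] using congrFun (congrFun h' j) j
  have hT : ∑ i ∈ T, (∑ j ∈ T, C i j ^ 2 + ∑ j ∈ Tᶜ, C i j ^ 2)
      = ∑ j ∈ T, (∑ i ∈ T, C i j ^ 2 + ∑ i ∈ Tᶜ, C i j ^ 2) := by
    simp only [sum_add_sum_compl, hrow, hcol]
  rw [sum_add_distrib, sum_add_distrib, sum_comm (s := T) (t := T)] at hT
  rw [sum_comm (s := Tᶜ)]
  linarith

def coordProj [DecidableEq n] (T : Finset n) : Matrix n n ℝ :=
  diagonal fun i => if i ∈ T then 1 else 0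

lemma sum_sq_coordProj_commutator [DecidableEq n] (C : Matrix n n ℝ) (T : Finset n) :
    ∑ i, ∑ j, (coordProj T * C - C * coordProj T) i j ^ 2
      = ∑ i ∈ T, ∑ j ∈ Tᶜ, C i j ^ 2 + ∑ i ∈ Tᶜ, ∑ j ∈ T, C i j ^ 2 := by
  have hc : ∀ i ∈ Tᶜ, i ∉ T := fun _ => mem_compl.mp
  rw [sum_sum_eq_blocks T]
  simp +contextual [coordProj, diagonal_mul, mul_diagonal, hc]

omit [Fintype n] in
lemma max_sq_mul_sum_sq_le {s t : Finset n} {a : ℝ} {g f : n → n → ℝ}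
    (h : ∀ i ∈ s, ∀ j ∈ t, a ≤ |f i j|) :
    max a 0 ^ 2 * ∑ i ∈ s, ∑ j ∈ t, g i j ^ 2 ≤ ∑ i ∈ s, ∑ j ∈ t, (g i j * f i j) ^ 2 := by
  simp only [mul_sum]
  gcongr with i hi j hj
  rw [mul_pow, mul_comm, ← sq_abs (f i j)]
  gcongr
  exact max_le (h i hi j hj) (abs_nonneg _)

lemma sum_sq_coordProj_commutator_le [DecidableEq n] {C : Matrix n n ℝ} (h : C * Cᵀ = 1)
    (h' : Cᵀ * C = 1) (T : Finset n) {μ ν : n → ℝ} {a b δ : ℝ} (hδ : 0 ≤ δ)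
    (hab : 2 * δ ≤ a + b) (ha : ∀ i ∈ T, ∀ j ∈ Tᶜ, a ≤ μ i - ν j)
    (hb : ∀ i ∈ Tᶜ, ∀ j ∈ T, b ≤ ν j - μ i) :
    δ ^ 2 * ∑ i, ∑ j, (coordProj T * C - C * coordProj T) i j ^ 2
      ≤ ∑ i, ∑ j, (C * diagonal ν - diagonal μ * C) i j ^ 2 := by
  set S := ∑ i ∈ T, ∑ j ∈ Tᶜ, C i j ^ 2
  set F := fun i j => (C * diagonal ν - diagonal μ * C) i j ^ 2
  have hF : ∀ i j, F i j = (C i j * (ν j - μ i)) ^ 2 := fun i j => by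
    simp only [F, Matrix.sub_apply, mul_diagonal, diagonal_mul]; ring
  have hS : S = ∑ i ∈ Tᶜ, ∑ j ∈ T, C i j ^ 2 := sum_sq_block_symm_of_orthogonal h h' T
  have hTTc : max a 0 ^ 2 * S ≤ ∑ i ∈ T, ∑ j ∈ Tᶜ, F i j := by
    simp only [hF]
    refine max_sq_mul_sum_sq_le fun i hi j hj => ?_
    rw [abs_sub_comm]
    exact (ha i hi j hj).trans (le_abs_self _)
  have hTcT : max b 0 ^ 2 * S ≤ ∑ i ∈ Tᶜ, ∑ j ∈ T, F i j := by
    rw [hS]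
    simp only [hF]
    exact max_sq_mul_sum_sq_le fun i hi j hj => (hb i hi j hj).trans (le_abs_self _)
  have hsq : 2 * δ ^ 2 ≤ max a 0 ^ 2 + max b 0 ^ 2 := by
    nlinarith [le_max_left a 0, le_max_left b 0, le_max_right a 0, le_max_right b 0,
      sq_nonneg (max a 0 - max b 0)]
  have hSnn : 0 ≤ S := by positivity
  have hdiag : 0 ≤ ∑ i ∈ T, ∑ j ∈ T, F i j + ∑ i ∈ Tᶜ, ∑ j ∈ Tᶜ, F i j := by positivity
  rw [sum_sq_coordProj_commutator, ← hS]
  calc δ ^ 2 * (S + S) = 2 * δ ^ 2 * S := by ring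
    _ ≤ (max a 0 ^ 2 + max b 0 ^ 2) * S := by gcongr
    _ ≤ ∑ i ∈ T, ∑ j ∈ Tᶜ, F i j + ∑ i ∈ Tᶜ, ∑ j ∈ T, F i j := by linarith
    _ ≤ ∑ i, ∑ j, F i j := by rw [sum_sum_eq_blocks T F]; linarith

lemma mul_of_transpose_eq_of_mulVec_eq_smul [DecidableEq n] {M : Matrix n n ℝ} {v : n → n → ℝ}
    {d : n → ℝ} (h : ∀ i, M *ᵥ v i = d i • v i) : M * (of v)ᵀ = (of v)ᵀ * diagonal d := by
  ext a i
  rw [mul_diagonal]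
  simpa [mul_apply, mulVec, dotProduct, mul_comm] using congrFun (h i) a

lemma of_mul_eq_of_mulVec_eq_smul [DecidableEq n] {M : Matrix n n ℝ} (hM : M.IsHermitian)
    {v : n → n → ℝ} {d : n → ℝ} (h : ∀ i, M *ᵥ v i = d i • v i) :
    of v * M = diagonal d * of v := by
  have hMt : Mᵀ = M := by simpa using hM.eq
  simpa [transpose_mul, hMt] using congrArg transpose (mul_of_transpose_eq_of_mulVec_eq_smul h)

lemma conj_eq_of_mulVec_eq_smul [DecidableEq n] {A B : Matrix n n ℝ} (hA : A.IsHermitian)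
    {u w : n → n → ℝ} {μ ν : n → ℝ} (hu : ∀ i, A *ᵥ u i = μ i • u i)
    (hw : ∀ i, (A + B) *ᵥ w i = ν i • w i) :
    of u * B * (of w)ᵀ = of u * (of w)ᵀ * diagonal ν - diagonal μ * (of u * (of w)ᵀ) := by
  have hB : B = (A + B) - A := by abel
  rw [hB, Matrix.mul_sub, Matrix.sub_mul, of_mul_eq_of_mulVec_eq_smul hA hu, Matrix.mul_assoc,
    mul_of_transpose_eq_of_mulVec_eq_smul hw]
  simp only [Matrix.mul_assoc]

lemma sum_vecMulVec_self_eq [DecidableEq n] (u : n → n → ℝ) (T : Finset n) :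
    ∑ i ∈ T, vecMulVec (u i) (u i) = (of u)ᵀ * coordProj T * of u := by
  ext a b
  rw [mul_apply]
  simp only [coordProj, mul_diagonal]
  simp [Matrix.sum_apply, vecMulVec_apply]

lemma conj_sub_conj_eq_commutator [DecidableEq n] {U W : Matrix n n ℝ} (hU : U * Uᵀ = 1)
    (hW : W * Wᵀ = 1) (E : Matrix n n ℝ) :
    U * (Uᵀ * E * U - Wᵀ * E * W) * Wᵀ = E * (U * Wᵀ) - U * Wᵀ * E := by
  simp only [Matrix.mul_sub, Matrix.sub_mul, ← Matrix.mul_assoc, hU, Matrix.one_mul]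
  simp only [Matrix.mul_assoc, hW, Matrix.mul_one]

theorem mul_frobNorm_projector_sub_le {p : ℕ} {A B : Matrix (Fin p) (Fin p) ℝ}
    (hA : A.IsHermitian) {u w : Fin p → Fin p → ℝ} {μ ν : Fin p → ℝ}
    (hu : ∀ i j, u i ⬝ᵥ u j = if i = j then 1 else 0)
    (hw : ∀ i j, w i ⬝ᵥ w j = if i = j then 1 else 0)
    (hAu : ∀ i, A *ᵥ u i = μ i • u i) (hABw : ∀ i, (A + B) *ᵥ w i = ν i • w i)
    (T : Finset (Fin p)) {a b δ : ℝ} (hδ : 0 ≤ δ) (hab : 2 * δ ≤ a + b)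
    (ha : ∀ i ∈ T, ∀ j ∈ Tᶜ, a ≤ μ i - ν j) (hb : ∀ i ∈ Tᶜ, ∀ j ∈ T, b ≤ ν j - μ i) :
    δ * frobNorm (∑ i ∈ T, vecMulVec (u i) (u i) - ∑ i ∈ T, vecMulVec (w i) (w i))
      ≤ frobNorm B := by
  have hU : of u * (of u)ᵀ = 1 := of_mul_transpose_eq_one hu
  have hW : of w * (of w)ᵀ = 1 := of_mul_transpose_eq_one hw
  have hC : of u * (of w)ᵀ * (of u * (of w)ᵀ)ᵀ = 1 := by
    rw [transpose_mul, transpose_transpose, Matrix.mul_assoc, ← Matrix.mul_assoc (of w)ᵀ,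
      mul_eq_one_comm.mp hW, Matrix.one_mul, hU]
  rw [frobNorm, frobNorm, Real.le_sqrt (by positivity) (by positivity), mul_pow,
    Real.sq_sqrt (by positivity), ← sum_sq_conj_orthogonal (mul_eq_one_comm.mp hU)
      (mul_eq_one_comm.mp hW) B, conj_eq_of_mulVec_eq_smul hA hAu hABw,
    ← sum_sq_conj_orthogonal (mul_eq_one_comm.mp hU) (mul_eq_one_comm.mp hW),
    sum_vecMulVec_self_eq, sum_vecMulVec_self_eq, conj_sub_conj_eq_commutator hU hW]
  exact sum_sq_coordProj_commutator_le hC (mul_eq_one_comm.mp hC) T hδ hab ha hb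

end ZwaldBlanchard

/-- Zwald–Blanchard perturbation bound for spectral projectors (finite
dimensional version): if `A` is symmetric positive semidefinite with simple
strictly decreasing eigenvalues `μ 0 > μ 1 > ⋯`, `λ_D = μ (D-1) > 0`,
`δ_D = (μ (D-1) − μ D)/2`, and `B` is symmetric with `‖B‖_F ≤ δ_D/2` and
`A + B` positive semidefinite with orthonormal eigenbasis `w` and eigenvalues
`ν` strictly decreasing, then the orthogonal projectors onto the spans of the
first `D` eigenvectors satisfy `‖P^D(A) − P^D(A+B)‖_F ≤ ‖B‖_F / δ_D`. -/
theorem stmt8 {p : ℕ} (D : ℕ) (hDp : D < p)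
    (A B : Matrix (Fin p) (Fin p) ℝ)
    (hA : A.IsHermitian)
    (μ ν : Fin p → ℝ) (u w : Fin p → (Fin p → ℝ))
    (hμdec : StrictAnti μ) (hνdec : StrictAnti ν)
    (huon : ∀ i j, u i ⬝ᵥ u j = if i = j then (1 : ℝ) else 0)
    (hwon : ∀ i j, w i ⬝ᵥ w j = if i = j then (1 : ℝ) else 0)
    (hueig : ∀ i, A.mulVec (u i) = μ i • u i)
    (hweig : ∀ i, (A + B).mulVec (w i) = ν i • w i) :
    frobNorm
        ((∑ i ∈ Finset.univ.filter (fun i : Fin p => (i : ℕ) < D),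
            vecMulVec (u i) (u i)) -
         (∑ i ∈ Finset.univ.filter (fun i : Fin p => (i : ℕ) < D),
            vecMulVec (w i) (w i))) ≤
      frobNorm B / ((μ ⟨D - 1, by omega⟩ - μ ⟨D, hDp⟩) / 2) := by
  rcases Nat.eq_zero_or_pos D with rfl | hD
  -- for `D = 0` the index `D - 1` truncates to `0`, so the gap is `0` and both sides vanish
  · simp [frobNorm]
  have hgap : (⟨D - 1, by omega⟩ : Fin p) < ⟨D, hDp⟩ := Fin.mk_lt_mk.mpr (by omega)
  have hδ : 0 < (μ ⟨D - 1, by omega⟩ - μ ⟨D, hDp⟩) / 2 := by linarith [hμdec hgap]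
  rw [le_div_iff₀ hδ, mul_comm]
  refine ZwaldBlanchard.mul_frobNorm_projector_sub_le hA huon hwon hueig hweig _ hδ.le
    (a := μ ⟨D - 1, by omega⟩ - ν ⟨D, hDp⟩) (b := ν ⟨D - 1, by omega⟩ - μ ⟨D, hDp⟩)
    (by linarith [hνdec hgap]) (fun i hi j hj => ?_) (fun i hi j hj => ?_)
  all_goals
    simp only [mem_compl, mem_filter, mem_univ, true_and, not_lt] at hi hj
  · linarith [hμdec.antitone (show i ≤ ⟨D - 1, by omega⟩ from Fin.le_def.mpr (by simp; omega)),
      hνdec.antitone (show ⟨D, hDp⟩ ≤ j from Fin.le_def.mpr hj)]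
  · linarith [hνdec.antitone (show j ≤ ⟨D - 1, by omega⟩ from Fin.le_def.mpr (by simp; omega)),
      hμdec.antitone (show ⟨D, hDp⟩ ≤ i from Fin.le_def.mpr hi)]
end

section
/- Let Θ₁, Θ₂ be symmetric positive definite p×p matrices with Γ = Θ₂ − Θ₁, and suppose Θ₁ + vΓ is positive definite for all v ∈ [0,1]. Then ln det(Θ₁) − ln det(Θ₂) = A − tr(Γ Σ₁), where Σ₁ = Θ₁⁻¹ and A = vec(Γ)ᵀ (∫₀¹ (1−v) (Θ₁+vΓ)⁻¹ ⊗ (Θ₁+vΓ)⁻¹ dv) vec(Γ). -/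
/-!
Put `X t = Θ₁ + t • Γ`. By Jacobi's formula and `d(X⁻¹) = -X⁻¹ Γ X⁻¹`, the function
`G t = (1 - t) tr(Γ X⁻¹) + log det X` has derivative `-(1 - t) tr(Γ X⁻¹ Γ X⁻¹)`, so the
fundamental theorem of calculus on `[0, 1]` yields the expansion with remainder
`∫₀¹ (1 - t) tr(Γ X⁻¹ Γ X⁻¹) dt`. For symmetric `Γ` and `X`, the trace
`tr(Γ X⁻¹ Γ X⁻¹)` is the Kronecker quadratic form `vec(Γ)ᵀ (X⁻¹ ⊗ X⁻¹) vec(Γ)`.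
-/

open Matrix Kronecker

/-- The scalar quadratic form `A` from the integral-remainder Taylor expansion
of `log det`: `vec(Γ)ᵀ (∫₀¹ (1−v)(Θ₁+vΓ)⁻¹ ⊗ (Θ₁+vΓ)⁻¹ dv) vec(Γ)`,
written with the integral pulled to the scalar level. -/
noncomputable def kronQuadForm {p : ℕ} (Θ₁ Γ : Matrix (Fin p) (Fin p) ℝ) : ℝ :=
  ∫ v in (0:ℝ)..1, (1 - v) *
    ((fun ij : Fin p × Fin p => Γ ij.1 ij.2) ⬝ᵥ
      (((Θ₁ + v • Γ)⁻¹ ⊗ₖ (Θ₁ + v • Γ)⁻¹).mulVec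
        fun ij : Fin p × Fin p => Γ ij.1 ij.2))

namespace Matrix

variable {𝕜 : Type*} [NontriviallyNormedField 𝕜] {n : Type*} [Fintype n] [DecidableEq n]

theorem dotProduct_kronecker_mulVec_vec {R l m : Type*} [CommSemiring R] [Fintype l] [Fintype m]
    (A B : Matrix l m R) (N : Matrix l l R) (M : Matrix m m R) :
    vec A ⬝ᵥ (M ⊗ₖ N) *ᵥ vec B = (Aᵀ * N * B * Mᵀ).trace := by
  rw [kronecker_mulVec_vec, vec_dotProduct_vec]
  simp only [Matrix.mul_assoc]

open Polynomial in
theorem hasDerivAt_det_one_add_smul (K : Matrix n n 𝕜) :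
    HasDerivAt (fun r : 𝕜 => det (1 + r • K)) (trace K) 0 := by
  have h := (det (1 + (X : 𝕜[X]) • K.map C)).hasDerivAt 0
  rw [derivative_det_one_add_X_smul] at h
  convert h using 1
  ext r
  simp [eval_det, ← smul_eq_mul_diagonal]

theorem hasDerivAt_det_add_smul {M Γ : Matrix n n 𝕜} {t : 𝕜} (ht : IsUnit (M + t • Γ).det) :
    HasDerivAt (fun s => det (M + s • Γ)) (det (M + t • Γ) * trace ((M + t • Γ)⁻¹ * Γ)) t := by
  set A := M + t • Γ with hA
  have hfactor : ∀ s, M + s • Γ = A * (1 + (s - t) • (A⁻¹ * Γ)) := fun s => by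
    rw [Matrix.mul_add, Matrix.mul_one, Matrix.mul_smul, ← Matrix.mul_assoc, mul_nonsing_inv _ ht,
      Matrix.one_mul, sub_smul, hA]
    abel
  simp_rw [hfactor, det_mul]
  refine HasDerivAt.const_mul _ ?_
  have h : HasDerivAt (fun r => det (1 + r • (A⁻¹ * Γ))) (trace (A⁻¹ * Γ)) (t - t) := by
    simpa only [sub_self] using hasDerivAt_det_one_add_smul (A⁻¹ * Γ)
  exact h.comp_sub_const t t

theorem continuousAt_inv_add_smul [CompleteSpace 𝕜] {M Γ : Matrix n n 𝕜} {t : 𝕜}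
    (ht : IsUnit (M + t • Γ).det) : ContinuousAt (fun s => (M + s • Γ)⁻¹) t := by
  obtain ⟨u, hu⟩ := ht
  have hline : Continuous fun s : 𝕜 => M + s • Γ := by fun_prop
  exact (continuousAt_matrix_inv _ (hu ▸ NormedRing.inverse_continuousAt u)).comp
    hline.continuousAt

section

/- The `L∞` operator norm makes square matrices a normed algebra whose topology is the
product topology, so that `hasFDerivAt_ringInverse` applies. -/
attribute [local instance] Matrix.linftyOpNormedRing Matrix.linftyOpNormedAlgebra

theorem hasDerivAt_inv_add_smul [CompleteSpace 𝕜] {M Γ : Matrix n n 𝕜} {t : 𝕜}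
    (ht : IsUnit (M + t • Γ).det) :
    HasDerivAt (fun s => (M + s • Γ)⁻¹) (-((M + t • Γ)⁻¹ * Γ * (M + t • Γ)⁻¹)) t := by
  -- instance search does not find completeness for this norm over a general `𝕜`
  have : HasSummableGeomSeries (Matrix n n 𝕜) :=
    @instHasSummableGeomSeriesOfCompleteSpace _ _ (FiniteDimensional.complete 𝕜 _)
  obtain ⟨u, hu⟩ := (isUnit_iff_isUnit_det _).mpr ht
  have hline := ((hasDerivAt_id' t).smul_const Γ).const_add M
  rw [one_smul] at hline
  have hinv := hasFDerivAt_ringInverse (𝕜 := 𝕜) u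
  rw [← Ring.inverse_unit, hu] at hinv
  have h := hinv.comp_hasDerivAt t hline
  simp only [Function.comp_def, _root_.neg_apply, ContinuousLinearMap.mulLeftRight_apply,
    ← nonsing_inv_eq_ringInverse] at h
  exact h.congr_deriv (by simp [Matrix.mul_assoc])

theorem hasDerivAt_trace_mul_inv_add_smul [CompleteSpace 𝕜] {M Γ : Matrix n n 𝕜} {t : 𝕜}
    (ht : IsUnit (M + t • Γ).det) :
    HasDerivAt (fun s => trace (Γ * (M + s • Γ)⁻¹))
      (-trace (Γ * (M + t • Γ)⁻¹ * Γ * (M + t • Γ)⁻¹)) t := by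
  let L := (traceLinearMap n 𝕜 𝕜 ∘ₗ LinearMap.mulLeft 𝕜 Γ).toContinuousLinearMap
  have h := L.hasFDerivAt.comp_hasDerivAt (f := fun s => (M + s • Γ)⁻¹) t
    (hasDerivAt_inv_add_smul ht)
  exact h.congr_deriv (by change trace (Γ * _) = _; simp [Matrix.mul_assoc])

end

theorem hasDerivAt_log_det_add_smul {M Γ : Matrix n n ℝ} {t : ℝ} (ht : IsUnit (M + t • Γ).det) :
    HasDerivAt (fun s => Real.log (det (M + s • Γ))) (trace (Γ * (M + t • Γ)⁻¹)) t := by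
  have h := (hasDerivAt_det_add_smul ht).log ht.ne_zero
  rwa [mul_div_cancel_left₀ _ ht.ne_zero, trace_mul_comm] at h

theorem log_det_sub_log_det_add_eq_integral_sub_trace {M Γ : Matrix n n ℝ}
    (h : ∀ t ∈ Set.Icc (0 : ℝ) 1, IsUnit (M + t • Γ).det) :
    Real.log M.det - Real.log (M + Γ).det =
      (∫ t in (0 : ℝ)..1, (1 - t) * trace (Γ * (M + t • Γ)⁻¹ * Γ * (M + t • Γ)⁻¹))
        - trace (Γ * M⁻¹) := by
  set q : ℝ → ℝ := fun t => trace (Γ * (M + t • Γ)⁻¹ * Γ * (M + t • Γ)⁻¹)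
  set G : ℝ → ℝ := fun t => (1 - t) * trace (Γ * (M + t • Γ)⁻¹) + Real.log (M + t • Γ).det
  have hG : ∀ t ∈ Set.uIcc (0 : ℝ) 1, HasDerivAt G (-((1 - t) * q t)) t := by
    intro t ht
    rw [Set.uIcc_of_le zero_le_one] at ht
    have h' := (((hasDerivAt_id t).const_sub 1).mul
      (hasDerivAt_trace_mul_inv_add_smul (h t ht))).add (hasDerivAt_log_det_add_smul (h t ht))
    exact h'.congr_deriv (by simp only [q, id]; ring)
  have hinv : ContinuousOn (fun t : ℝ => (M + t • Γ)⁻¹) (Set.Icc 0 1) := fun t ht =>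
    (continuousAt_inv_add_smul (h t ht)).continuousWithinAt
  have hq : ContinuousOn q (Set.Icc 0 1) := continuous_id.matrix_trace.comp_continuousOn
    (((continuousOn_const.mul hinv).mul continuousOn_const).mul hinv)
  have hint : IntervalIntegrable (fun t => -((1 - t) * q t)) MeasureTheory.volume 0 1 :=
    ContinuousOn.intervalIntegrable (by
      rw [Set.uIcc_of_le zero_le_one]
      exact ((continuousOn_const.sub continuousOn_id).mul hq).neg)
  have hFTC := intervalIntegral.integral_eq_sub_of_hasDerivAt hG hint
  rw [intervalIntegral.integral_neg] at hFTC
  simp only [G, sub_self, one_smul, zero_mul, zero_add, sub_zero, zero_smul, add_zero, one_mul]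
    at hFTC
  linarith

end Matrix

theorem kronQuadForm_eq_integral {p : ℕ} {M Γ : Matrix (Fin p) (Fin p) ℝ} (hM : M.IsSymm)
    (hΓ : Γ.IsSymm) :
    kronQuadForm M Γ =
      ∫ t in (0 : ℝ)..1, (1 - t) * trace (Γ * (M + t • Γ)⁻¹ * Γ * (M + t • Γ)⁻¹) := by
  refine intervalIntegral.integral_congr fun t _ => ?_
  have hinv : ((M + t • Γ)⁻¹).IsSymm := (hM.add (hΓ.smul t)).inv
  -- the vector in `kronQuadForm` lists `Γ` row by row, i.e. it is `vec Γᵀ`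
  change (1 - t) * (vec Γᵀ ⬝ᵥ ((M + t • Γ)⁻¹ ⊗ₖ (M + t • Γ)⁻¹) *ᵥ vec Γᵀ) = _
  rw [dotProduct_kronecker_mulVec_vec Γᵀ Γᵀ, transpose_transpose, hΓ.eq, hinv.eq]

theorem stmt10_general {p : ℕ} (Θ₁ Θ₂ : Matrix (Fin p) (Fin p) ℝ)
    (hline : ∀ v : ℝ, v ∈ Set.Icc (0:ℝ) 1 → (Θ₁ + v • (Θ₂ - Θ₁)).PosDef) :
    Real.log Θ₁.det - Real.log Θ₂.det =
      kronQuadForm Θ₁ (Θ₂ - Θ₁) - ((Θ₂ - Θ₁) * Θ₁⁻¹).trace := by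
  have hsymm : ∀ v ∈ Set.Icc (0 : ℝ) 1, (Θ₁ + v • (Θ₂ - Θ₁)).IsSymm := fun v hv =>
    isHermitian_iff_isSymm.mp (hline v hv).isHermitian
  have hΘ₁ : Θ₁.IsSymm := by simpa using hsymm 0 (by simp)
  have hΘ₂ : Θ₂.IsSymm := by simpa using hsymm 1 (by simp)
  rw [kronQuadForm_eq_integral hΘ₁ (hΘ₂.sub hΘ₁),
    ← log_det_sub_log_det_add_eq_integral_sub_trace fun t ht => (hline t ht).det_pos.ne'.isUnit,
    add_sub_cancel]

/-- Exact second-order Taylor expansion of the log-determinant: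
`ln det Θ₁ − ln det Θ₂ = A − tr(Γ Σ₁)` with `Γ = Θ₂ − Θ₁`, `Σ₁ = Θ₁⁻¹`. -/
theorem stmt10 {p : ℕ} (Θ₁ Θ₂ : Matrix (Fin p) (Fin p) ℝ)
    (h₁ : Θ₁.PosDef) (h₂ : Θ₂.PosDef)
    (hline : ∀ v : ℝ, v ∈ Set.Icc (0:ℝ) 1 → (Θ₁ + v • (Θ₂ - Θ₁)).PosDef) :
    Real.log Θ₁.det - Real.log Θ₂.det =
      kronQuadForm Θ₁ (Θ₂ - Θ₁) - ((Θ₂ - Θ₁) * Θ₁⁻¹).trace :=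
  stmt10_general Θ₁ Θ₂ hline
end

section
/- Let Θ₁ be symmetric positive definite and Γ symmetric with λ_min(Θ₁) > ‖Γ‖₂, so that Θ₁ + vΓ is positive definite for all v ∈ [0,1]. Then A := vec(Γ)ᵀ (∫₀¹ (1−v)(Θ₁+vΓ)⁻¹ ⊗ (Θ₁+vΓ)⁻¹ dv) vec(Γ) satisfies A ≥ ‖Γ‖_F² · λ_min(Θ₁⁻¹)² / (2·(1 + λ_min(Θ₁⁻¹)·‖Γ‖₂)²). -/
open Matrix Kronecker

noncomputable def opNorm {p q : ℕ} (M : Matrix (Fin p) (Fin q) ℝ) : ℝ :=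
  ‖(Matrix.toEuclideanLin M).toContinuousLinearMap‖

noncomputable def lamMin {p : ℕ} (hp : 0 < p) {M : Matrix (Fin p) (Fin p) ℝ}
    (hM : M.IsHermitian) : ℝ :=
  Finset.univ.inf' (Finset.univ_nonempty_iff.mpr ⟨⟨0, hp⟩⟩) hM.eigenvalues

/-!
For `v ∈ [0,1]` put `B = Θ₁ + vΓ` and `β = λ_min(Θ₁⁻¹)⁻¹ + ‖Γ‖₂ = λ_max(Θ₁) + ‖Γ‖₂`.
Since `-‖Γ‖₂ ≤ vΓ ≤ ‖Γ‖₂` in the Loewner order, `(λ_min(Θ₁) - ‖Γ‖₂) I ≤ B ≤ β I`: so `B` is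
positive definite and `B⁻¹ ≥ β⁻¹ I`. Then `B⁻¹ ⊗ B⁻¹ ≥ β⁻² I`, so the integrand is at least
`(1 - v) β⁻² ‖Γ‖_F²`, whose integral is `β⁻² ‖Γ‖_F² / 2`; and
`β⁻² = λ_min(Θ₁⁻¹)² / (1 + λ_min(Θ₁⁻¹) ‖Γ‖₂)²`.
-/

-- With the L2 operator norm, `‖M‖` is definitionally `opNorm M`.
open scoped MatrixOrder Matrix.Norms.L2Operator

theorem Continuous.matrix_kronecker {X R m n p q : Type*} [TopologicalSpace X] [TopologicalSpace R]
    [Mul R] [ContinuousMul R] {A : X → Matrix m n R} {B : X → Matrix p q R}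
    (hA : Continuous A) (hB : Continuous B) : Continuous fun x => A x ⊗ₖ B x :=
  continuous_matrix fun i j => (hA.matrix_elem i.1 j.1).mul (hB.matrix_elem i.2 j.2)

theorem ContinuousOn.matrix_inv {X n : Type*} [TopologicalSpace X] [Fintype n] [DecidableEq n]
    {A : X → Matrix n n ℝ} {s : Set X} (hA : ContinuousOn A s) (hdet : ∀ x ∈ s, (A x).det ≠ 0) :
    ContinuousOn (fun x => (A x)⁻¹) s := by
  refine fun x hx => (continuousAt_matrix_inv (A x) ?_).comp_continuousWithinAt (hA x hx)
  rw [Ring.inverse_eq_inv']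
  exact continuousAt_inv₀ (hdet x hx)

lemma norm_smul_le_of_abs_le_one {E : Type*} [SeminormedAddCommGroup E] [NormedSpace ℝ E] {v : ℝ}
    (hv : |v| ≤ 1) (x : E) : ‖v • x‖ ≤ ‖x‖ := by
  rw [norm_smul, Real.norm_eq_abs]
  exact mul_le_of_le_one_left (norm_nonneg _) hv

lemma le_integral_one_sub_mul {f : ℝ → ℝ} {K : ℝ} (hf : ContinuousOn f (Set.Icc 0 1))
    (h : ∀ v ∈ Set.Icc (0 : ℝ) 1, K ≤ f v) : K / 2 ≤ ∫ v in (0 : ℝ)..1, (1 - v) * f v := by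
  have hint : IntervalIntegrable (fun v => (1 - v) * f v) MeasureTheory.volume 0 1 :=
    ((continuous_const.sub continuous_id).continuousOn.mul hf).intervalIntegrable_of_Icc
      zero_le_one
  calc K / 2 = ∫ v in (0 : ℝ)..1, (1 - v) * K := by
        rw [intervalIntegral.integral_mul_const, intervalIntegral.integral_sub
          intervalIntegrable_const intervalIntegral.intervalIntegrable_id, integral_id]
        norm_num
        ring
    _ ≤ ∫ v in (0 : ℝ)..1, (1 - v) * f v :=
        intervalIntegral.integral_mono_on zero_le_one
          ((by fun_prop : Continuous fun v : ℝ => (1 - v) * K).intervalIntegrable 0 1) hint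
          fun v hv => mul_le_mul_of_nonneg_left (h v hv) (by linarith [hv.2])

namespace Matrix

variable {n : Type*} [Fintype n] [DecidableEq n]

lemma IsHermitian.algebraMap_le_of_le_eigenvalues {A : Matrix n n ℝ} (hA : A.IsHermitian) {c : ℝ}
    (h : ∀ i, c ≤ hA.eigenvalues i) : algebraMap ℝ (Matrix n n ℝ) c ≤ A := by
  refine algebraMap_le_of_le_spectrum (fun x hx => ?_) hA
  obtain ⟨i, rfl⟩ := hA.spectrum_real_eq_range_eigenvalues ▸ hx
  exact h i

lemma IsHermitian.algebraMap_neg_norm_le [Nonempty n] {A : Matrix n n ℝ} (hA : A.IsHermitian) :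
    algebraMap ℝ (Matrix n n ℝ) (-‖A‖) ≤ A :=
  algebraMap_le_of_le_spectrum (fun _ hx => neg_le_of_abs_le (spectrum.norm_le_norm_of_mem hx)) hA

lemma IsHermitian.le_algebraMap_norm [Nonempty n] {A : Matrix n n ℝ} (hA : A.IsHermitian) :
    A ≤ algebraMap ℝ (Matrix n n ℝ) ‖A‖ :=
  le_algebraMap_of_spectrum_le (fun _ hx => le_of_abs_le (spectrum.norm_le_norm_of_mem hx)) hA

lemma PosDef.pos_of_mem_spectrum {A : Matrix n n ℝ} (hA : A.PosDef) {x : ℝ}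
    (hx : x ∈ spectrum ℝ A) : 0 < x := by
  obtain ⟨i, rfl⟩ := hA.isHermitian.spectrum_real_eq_range_eigenvalues ▸ hx
  exact hA.eigenvalues_pos i

lemma PosDef.inv_mem_spectrum_of_mem_spectrum_inv {A : Matrix n n ℝ} (hA : A.PosDef) {x : ℝ}
    (hx : x ∈ spectrum ℝ A⁻¹) : x⁻¹ ∈ spectrum ℝ A := by
  have h := spectrum.inv₀_mem_inv_iff (a := hA.isUnit.unit) (r := x⁻¹)
  rw [inv_inv, coe_units_inv, IsUnit.unit_spec] at h
  exact h.mp hx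

lemma posDef_of_algebraMap_le {A : Matrix n n ℝ} {c : ℝ} (hc : 0 < c)
    (h : algebraMap ℝ (Matrix n n ℝ) c ≤ A) : A.PosDef := by
  have hc' : (algebraMap ℝ (Matrix n n ℝ) c).PosDef := by
    rw [Algebra.algebraMap_eq_smul_one]
    exact PosDef.one.smul hc
  simpa using hc'.add_posSemidef (le_iff.mp h)

lemma PosDef.inv_le_algebraMap_inv {A : Matrix n n ℝ} (hA : A.PosDef) {c : ℝ} (hc : 0 < c)
    (h : algebraMap ℝ (Matrix n n ℝ) c ≤ A) : A⁻¹ ≤ algebraMap ℝ (Matrix n n ℝ) c⁻¹ := by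
  refine le_algebraMap_of_spectrum_le (fun x hx => ?_) hA.inv.isHermitian
  have hcx : c ≤ x⁻¹ := (algebraMap_le_iff_le_spectrum hA.isHermitian).mp h _
    (hA.inv_mem_spectrum_of_mem_spectrum_inv hx)
  rw [← inv_inv x]
  exact inv_anti₀ hc hcx

lemma PosDef.algebraMap_inv_le_inv {A : Matrix n n ℝ} (hA : A.PosDef) {c : ℝ}
    (h : A ≤ algebraMap ℝ (Matrix n n ℝ) c) : algebraMap ℝ (Matrix n n ℝ) c⁻¹ ≤ A⁻¹ := by
  refine algebraMap_le_of_le_spectrum (fun x hx => ?_) hA.inv.isHermitian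
  have hxc : x⁻¹ ≤ c := (le_algebraMap_iff_spectrum_le hA.isHermitian).mp h _
    (hA.inv_mem_spectrum_of_mem_spectrum_inv hx)
  rw [← inv_inv x]
  exact inv_anti₀ (inv_pos.mpr (hA.inv.pos_of_mem_spectrum hx)) hxc

lemma algebraMap_mul_le_kronecker {m : Type*} [Fintype m] [DecidableEq m]
    {A : Matrix n n ℝ} {B : Matrix m m ℝ} {c d : ℝ} (hc : 0 ≤ c) (hd : 0 ≤ d)
    (hA : algebraMap ℝ (Matrix n n ℝ) c ≤ A) (hB : algebraMap ℝ (Matrix m m ℝ) d ≤ B) :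
    algebraMap ℝ (Matrix (n × m) (n × m) ℝ) (c * d) ≤ A ⊗ₖ B := by
  have hB₀ : B.PosSemidef := ((algebraMap_nonneg _ hd).trans hB).posSemidef
  have hsplit : A ⊗ₖ B - algebraMap ℝ _ (c * d)
      = (A - algebraMap ℝ _ c) ⊗ₖ B + c • ((1 : Matrix n n ℝ) ⊗ₖ (B - algebraMap ℝ _ d)) := by
    ext ⟨i, k⟩ ⟨j, l⟩
    simp only [Algebra.algebraMap_eq_smul_one, sub_apply, add_apply, smul_apply, one_apply,
      kroneckerMap_apply, Prod.mk.injEq, smul_eq_mul, mul_ite, ite_mul, mul_one, one_mul, mul_zero,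
      zero_mul]
    split_ifs <;> simp_all <;> ring
  rw [le_iff, hsplit]
  exact ((le_iff.mp hA).kronecker hB₀).add (PosSemidef.one.kronecker (le_iff.mp hB) |>.smul hc)

lemma dotProduct_mulVec_ge_of_algebraMap_le {A : Matrix n n ℝ} {c : ℝ}
    (h : algebraMap ℝ (Matrix n n ℝ) c ≤ A) (x : n → ℝ) : c * (x ⬝ᵥ x) ≤ x ⬝ᵥ A *ᵥ x := by
  have := (le_iff.mp h).dotProduct_mulVec_nonneg x
  simp only [star_trivial, Algebra.algebraMap_eq_smul_one, sub_mulVec, smul_mulVec, one_mulVec,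
    dotProduct_sub, dotProduct_smul, smul_eq_mul] at this
  linarith

lemma algebraMap_sub_norm_le_add_smul [Nonempty n] {Θ Γ : Matrix n n ℝ} (hΓ : Γ.IsHermitian)
    {a v : ℝ} (hv : |v| ≤ 1) (hΘ : algebraMap ℝ (Matrix n n ℝ) a ≤ Θ) :
    algebraMap ℝ (Matrix n n ℝ) (a - ‖Γ‖) ≤ Θ + v • Γ :=
  calc algebraMap ℝ (Matrix n n ℝ) (a - ‖Γ‖)
      ≤ algebraMap ℝ (Matrix n n ℝ) a + algebraMap ℝ (Matrix n n ℝ) (-‖v • Γ‖) := by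
        rw [← map_add, ← sub_eq_add_neg]
        exact algebraMap_mono _ (by linarith [norm_smul_le_of_abs_le_one hv Γ])
    _ ≤ Θ + v • Γ := add_le_add hΘ (hΓ.smul (IsSelfAdjoint.all v)).algebraMap_neg_norm_le

lemma add_smul_le_algebraMap_add_norm [Nonempty n] {Θ Γ : Matrix n n ℝ} (hΓ : Γ.IsHermitian)
    {b v : ℝ} (hv : |v| ≤ 1) (hΘ : Θ ≤ algebraMap ℝ (Matrix n n ℝ) b) :
    Θ + v • Γ ≤ algebraMap ℝ (Matrix n n ℝ) (b + ‖Γ‖) :=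
  calc Θ + v • Γ ≤ algebraMap ℝ (Matrix n n ℝ) b + algebraMap ℝ (Matrix n n ℝ) ‖v • Γ‖ :=
        add_le_add hΘ (hΓ.smul (IsSelfAdjoint.all v)).le_algebraMap_norm
    _ ≤ algebraMap ℝ (Matrix n n ℝ) (b + ‖Γ‖) := by
        rw [← map_add]
        exact algebraMap_mono _ (by linarith [norm_smul_le_of_abs_le_one hv Γ])

lemma PosDef.inv_sq_mul_dotProduct_le_kronecker_inv {B : Matrix n n ℝ} (hB : B.PosDef) {β : ℝ}
    (hβ : 0 < β) (h : B ≤ algebraMap ℝ (Matrix n n ℝ) β) (x : n × n → ℝ) :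
    β⁻¹ * β⁻¹ * (x ⬝ᵥ x) ≤ x ⬝ᵥ (B⁻¹ ⊗ₖ B⁻¹) *ᵥ x :=
  have hB' := hB.algebraMap_inv_le_inv h
  dotProduct_mulVec_ge_of_algebraMap_le
    (algebraMap_mul_le_kronecker (inv_nonneg.2 hβ.le) (inv_nonneg.2 hβ.le) hB' hB') x

lemma continuousOn_dotProduct_kronecker_inv_mulVec {A : ℝ → Matrix n n ℝ} {s : Set ℝ}
    (hA : ContinuousOn A s) (hdet : ∀ v ∈ s, (A v).det ≠ 0) (x : n × n → ℝ) :
    ContinuousOn (fun v => x ⬝ᵥ ((A v)⁻¹ ⊗ₖ (A v)⁻¹) *ᵥ x) s :=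
  (continuous_const.dotProduct ((continuous_id.matrix_kronecker continuous_id).matrix_mulVec
    continuous_const)).comp_continuousOn (hA.matrix_inv hdet)

end Matrix

lemma algebraMap_lamMin_le {p : ℕ} (hp : 0 < p) {M : Matrix (Fin p) (Fin p) ℝ}
    (hM : M.IsHermitian) : algebraMap ℝ (Matrix (Fin p) (Fin p) ℝ) (lamMin hp hM) ≤ M :=
  hM.algebraMap_le_of_le_eigenvalues fun i => Finset.inf'_le _ (Finset.mem_univ i)

lemma lamMin_pos {p : ℕ} (hp : 0 < p) {M : Matrix (Fin p) (Fin p) ℝ} (hM : M.PosDef) :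
    0 < lamMin hp hM.isHermitian :=
  (Finset.lt_inf'_iff _).2 fun i _ => hM.eigenvalues_pos i

lemma frobNorm_sq_eq_dotProduct {p q : ℕ} (M : Matrix (Fin p) (Fin q) ℝ) :
    frobNorm M ^ 2
      = (fun ij : Fin p × Fin q => M ij.1 ij.2) ⬝ᵥ (fun ij : Fin p × Fin q => M ij.1 ij.2) := by
  rw [frobNorm, Real.sq_sqrt (by positivity), dotProduct, Fintype.sum_prod_type]
  simp only [sq]

/-- Lower bound for the log-det Taylor remainder:
`A ≥ ‖Γ‖_F² λ_min(Θ₁⁻¹)² / (2 (1 + λ_min(Θ₁⁻¹) ‖Γ‖₂)²)`. -/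
theorem stmt12 {p : ℕ} (hp : 0 < p) (Θ₁ Γ : Matrix (Fin p) (Fin p) ℝ)
    (h₁ : Θ₁.PosDef) (hΓ : Γ.IsHermitian)
    (hsmall : opNorm Γ < lamMin hp h₁.isHermitian)
    (hinv : (Θ₁⁻¹).IsHermitian) :
    frobNorm Γ ^ 2 * (lamMin hp hinv) ^ 2 /
        (2 * (1 + lamMin hp hinv * opNorm Γ) ^ 2) ≤
      kronQuadForm Θ₁ Γ := by
  have : Nonempty (Fin p) := ⟨⟨0, hp⟩⟩
  set m := lamMin hp hinv
  have hm : 0 < m := lamMin_pos hp h₁.inv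
  set β := m⁻¹ + opNorm Γ
  have hβ : 0 < β := add_pos_of_pos_of_nonneg (inv_pos.2 hm) (norm_nonneg _)
  have hΘ₁ : Θ₁ ≤ algebraMap ℝ _ m⁻¹ := by
    simpa [nonsing_inv_nonsing_inv _ h₁.det_pos.ne'.isUnit] using
      h₁.inv.inv_le_algebraMap_inv hm (algebraMap_lamMin_le hp hinv)
  have hB : ∀ v ∈ Set.Icc (0 : ℝ) 1,
      (Θ₁ + v • Γ).PosDef ∧ Θ₁ + v • Γ ≤ algebraMap ℝ _ β := fun v hv => by
    have hv' : |v| ≤ 1 := abs_le.2 ⟨by linarith [hv.1], hv.2⟩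
    exact ⟨posDef_of_algebraMap_le (sub_pos.2 hsmall)
        (algebraMap_sub_norm_le_add_smul hΓ hv' (algebraMap_lamMin_le hp _)),
      add_smul_le_algebraMap_add_norm hΓ hv' hΘ₁⟩
  have hcont := continuousOn_dotProduct_kronecker_inv_mulVec (A := fun v => Θ₁ + v • Γ)
    (by fun_prop) (fun v hv => (hB v hv).1.det_pos.ne') fun ij => Γ ij.1 ij.2
  have hmβ : m * β = 1 + m * opNorm Γ := by rw [mul_add, mul_inv_cancel₀ hm.ne']
  calc frobNorm Γ ^ 2 * m ^ 2 / (2 * (1 + m * opNorm Γ) ^ 2)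
      = β⁻¹ * β⁻¹ * frobNorm Γ ^ 2 / 2 := by
        rw [← hmβ]
        field_simp
    _ ≤ kronQuadForm Θ₁ Γ := le_integral_one_sub_mul hcont fun v hv => by
        rw [frobNorm_sq_eq_dotProduct]
        exact (hB v hv).1.inv_sq_mul_dotProduct_le_kronecker_inv hβ (hB v hv).2 _
end

section
/- Let Θ₁ be symmetric positive definite and Γ symmetric with ‖Γ‖₂·‖Θ₁⁻¹‖₂ < 1. Then A := vec(Γ)ᵀ (∫₀¹ (1−v)(Θ₁+vΓ)⁻¹ ⊗ (Θ₁+vΓ)⁻¹ dv) vec(Γ) satisfies A ≤ ‖Γ‖_F² · ‖Θ₁⁻¹‖₂² / (2·(1 − ‖Θ₁⁻¹‖₂·‖Γ‖₂)²). -/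
open Matrix Kronecker

/-!
Write `Θ₁ + vΓ = Θ₁ (1 + v Θ₁⁻¹ Γ)`: the Neumann series bounds `‖(Θ₁ + vΓ)⁻¹‖₂` by
`‖Θ₁⁻¹‖₂ / (1 - ‖Θ₁⁻¹‖₂ ‖Γ‖₂)` uniformly for `v ∈ [0, 1]`. Since `(A ⊗ B) vec X = vec (B X Aᵀ)`
and multiplying by a matrix scales the Frobenius norm by at most its operator norm,
`‖A ⊗ B‖₂ ≤ ‖A‖₂ ‖B‖₂`; so the quadratic form of `B ⊗ B` is at most `‖B‖₂² ‖Γ‖_F²`, and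
`∫₀¹ (1 - v) dv = 1/2` gives the factor `1/2`.
-/

open scoped Matrix.Norms.L2Operator
open WithLp

namespace Matrix

section vec

variable {𝕜 : Type*} [RCLike 𝕜] {k m n : Type*} [Fintype k] [Fintype m] [Fintype n]

lemma norm_toLp_vec_sq (M : Matrix m n 𝕜) :
    ‖toLp 2 (vec M)‖ ^ 2 = ∑ j, ‖toLp 2 (fun i => M i j)‖ ^ 2 := by
  simp [EuclideanSpace.norm_sq_eq, Fintype.sum_prod_type]

lemma norm_toLp_vec_transpose (M : Matrix m n 𝕜) : ‖toLp 2 (vec Mᵀ)‖ = ‖toLp 2 (vec M)‖ := by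
  rw [← sq_eq_sq₀ (norm_nonneg _) (norm_nonneg _), norm_toLp_vec_sq, norm_toLp_vec_sq]
  simp only [EuclideanSpace.norm_sq_eq, transpose_apply]
  exact Finset.sum_comm

variable [DecidableEq n]

lemma norm_toLp_mulVec_le (A : Matrix m n 𝕜) (x : n → 𝕜) :
    ‖toLp 2 (A *ᵥ x)‖ ≤ ‖A‖ * ‖toLp 2 x‖ :=
  A.l2_opNorm_mulVec (toLp 2 x)

lemma norm_toLp_vec_mul_le (A : Matrix m n 𝕜) (X : Matrix n k 𝕜) :
    ‖toLp 2 (vec (A * X))‖ ≤ ‖A‖ * ‖toLp 2 (vec X)‖ := by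
  refine le_of_pow_le_pow_left₀ two_ne_zero (by positivity) ?_
  rw [mul_pow, norm_toLp_vec_sq, norm_toLp_vec_sq, Finset.mul_sum]
  gcongr with j
  rw [← mul_pow]
  gcongr
  exact norm_toLp_mulVec_le A fun l => X l j

lemma norm_toLp_vec_mul_transpose_le (X : Matrix k n 𝕜) (A : Matrix m n 𝕜) :
    ‖toLp 2 (vec (X * Aᵀ))‖ ≤ ‖A‖ * ‖toLp 2 (vec X)‖ := by
  rw [← norm_toLp_vec_transpose, transpose_mul, transpose_transpose,
    ← norm_toLp_vec_transpose X]
  exact norm_toLp_vec_mul_le A Xᵀ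

end vec

lemma l2_opNorm_kronecker_le {𝕜 : Type*} [RCLike 𝕜] {m m' n n' : Type*} [Fintype m]
    [Fintype m'] [Fintype n] [Fintype n'] [DecidableEq m'] [DecidableEq n']
    (A : Matrix m m' 𝕜) (B : Matrix n n' 𝕜) : ‖A ⊗ₖ B‖ ≤ ‖A‖ * ‖B‖ := by
  rw [l2_opNorm_def]
  refine ContinuousLinearMap.opNorm_le_bound _ (by positivity) fun x => ?_
  set X : Matrix n' m' 𝕜 := of fun j i => x (i, j)
  change ‖toLp 2 ((A ⊗ₖ B) *ᵥ vec X)‖ ≤ ‖A‖ * ‖B‖ * ‖toLp 2 (vec X)‖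
  rw [kronecker_mulVec_vec, mul_assoc]
  calc ‖toLp 2 (vec (B * X * Aᵀ))‖ ≤ ‖A‖ * ‖toLp 2 (vec (B * X))‖ :=
        norm_toLp_vec_mul_transpose_le _ _
    _ ≤ ‖A‖ * (‖B‖ * ‖toLp 2 (vec X)‖) := by gcongr; exact norm_toLp_vec_mul_le _ _

variable {n : Type*} [Fintype n] [DecidableEq n]

open scoped RealInnerProductSpace in
lemma dotProduct_mulVec_le_l2_opNorm_mul (K : Matrix n n ℝ) (x : n → ℝ) :
    x ⬝ᵥ (K *ᵥ x) ≤ ‖K‖ * ‖toLp 2 x‖ ^ 2 :=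
  calc x ⬝ᵥ (K *ᵥ x) = ⟪toLp 2 x, toEuclideanCLM (𝕜 := ℝ) K (toLp 2 x)⟫ :=
        (inner_toEuclideanCLM K _ _).symm
    _ ≤ ‖toLp 2 x‖ * ‖toLp 2 (K *ᵥ x)‖ := real_inner_le_norm _ _
    _ ≤ ‖toLp 2 x‖ * (‖K‖ * ‖toLp 2 x‖) := by gcongr; exact norm_toLp_mulVec_le K x
    _ = ‖K‖ * ‖toLp 2 x‖ ^ 2 := by ring

section inverse

variable {𝕜 : Type*} [RCLike 𝕜]

lemma l2_opNorm_one_le : ‖(1 : Matrix n n 𝕜)‖ ≤ 1 := by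
  rw [cstar_norm_def, map_one]
  exact ContinuousLinearMap.norm_id_le

lemma l2_opNorm_inv_one_sub_le (T : Matrix n n 𝕜) (hT : ‖T‖ < 1) :
    ‖(1 - T)⁻¹‖ ≤ (1 - ‖T‖)⁻¹ := by
  have hgeom := tsum_geometric_le_of_norm_lt_one T hT
  rw [geom_series_eq_inverse T hT, ← nonsing_inv_eq_ringInverse] at hgeom
  linarith [l2_opNorm_one_le (n := n) (𝕜 := 𝕜)]

lemma l2_opNorm_inv_add_le (Θ E : Matrix n n 𝕜) (hΘ : IsUnit Θ.det)
    (hE : ‖Θ⁻¹‖ * ‖E‖ < 1) : ‖(Θ + E)⁻¹‖ ≤ ‖Θ⁻¹‖ / (1 - ‖Θ⁻¹‖ * ‖E‖) := by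
  set T := -(Θ⁻¹ * E)
  have hT : ‖T‖ ≤ ‖Θ⁻¹‖ * ‖E‖ := by rw [norm_neg]; exact norm_mul_le _ _
  have hfac : Θ + E = Θ * (1 - T) := by
    rw [sub_neg_eq_add, Matrix.mul_add, Matrix.mul_one, ← Matrix.mul_assoc,
      mul_nonsing_inv _ hΘ, Matrix.one_mul]
  calc ‖(Θ + E)⁻¹‖ = ‖(1 - T)⁻¹ * Θ⁻¹‖ := by rw [hfac, mul_inv_rev]
    _ ≤ ‖(1 - T)⁻¹‖ * ‖Θ⁻¹‖ := norm_mul_le _ _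
    _ ≤ (1 - ‖Θ⁻¹‖ * ‖E‖)⁻¹ * ‖Θ⁻¹‖ := by
        refine mul_le_mul_of_nonneg_right ?_ (norm_nonneg _)
        exact (l2_opNorm_inv_one_sub_le T (hT.trans_lt hE)).trans
          (inv_anti₀ (by linarith) (by linarith))
    _ = ‖Θ⁻¹‖ / (1 - ‖Θ⁻¹‖ * ‖E‖) := by rw [div_eq_inv_mul]

lemma l2_opNorm_inv_add_smul_le (Θ E : Matrix n n 𝕜) (hΘ : IsUnit Θ.det)
    (hE : ‖Θ⁻¹‖ * ‖E‖ < 1) {c : 𝕜} (hc : ‖c‖ ≤ 1) :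
    ‖(Θ + c • E)⁻¹‖ ≤ ‖Θ⁻¹‖ / (1 - ‖Θ⁻¹‖ * ‖E‖) := by
  have hcE : ‖Θ⁻¹‖ * ‖c • E‖ ≤ ‖Θ⁻¹‖ * ‖E‖ := by
    rw [norm_smul]
    gcongr
    exact mul_le_of_le_one_left (norm_nonneg _) hc
  refine (l2_opNorm_inv_add_le Θ (c • E) hΘ (hcE.trans_lt hE)).trans ?_
  gcongr

end inverse

end Matrix

lemma intervalIntegral_one_sub_mul_le {f : ℝ → ℝ} {C : ℝ} (hC : 0 ≤ C)
    (hf : ∀ v ∈ Set.Icc (0 : ℝ) 1, f v ≤ C) :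
    ∫ v in (0 : ℝ)..1, (1 - v) * f v ≤ C / 2 := by
  by_cases hint : IntervalIntegrable (fun v => (1 - v) * f v) MeasureTheory.volume 0 1
  · have hg : IntervalIntegrable (fun v : ℝ => (1 - v) * C) MeasureTheory.volume 0 1 :=
      (by fun_prop : Continuous fun v : ℝ => (1 - v) * C).intervalIntegrable _ _
    calc ∫ v in (0 : ℝ)..1, (1 - v) * f v ≤ ∫ v in (0 : ℝ)..1, (1 - v) * C :=
          intervalIntegral.integral_mono_on zero_le_one hint hg
            fun v hv => mul_le_mul_of_nonneg_left (hf v hv) (by linarith [hv.2])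
      _ = C / 2 := by
          rw [intervalIntegral.integral_mul_const, intervalIntegral.integral_sub
            intervalIntegrable_const intervalIntegral.intervalIntegrable_id, integral_id]
          norm_num
          ring
  · rw [intervalIntegral.integral_undef hint]
    positivity

lemma opNorm_eq_l2_opNorm {p q : ℕ} (M : Matrix (Fin p) (Fin q) ℝ) : opNorm M = ‖M‖ := rfl

lemma frobNorm_eq_norm_toLp {p q : ℕ} (M : Matrix (Fin p) (Fin q) ℝ) :
    frobNorm M = ‖toLp 2 (fun ij : Fin p × Fin q => M ij.1 ij.2)‖ := by
  simp [frobNorm, EuclideanSpace.norm_eq, Fintype.sum_prod_type]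

theorem stmt13_general {p : ℕ} (Θ₁ Γ : Matrix (Fin p) (Fin p) ℝ)
    (h₁ : Θ₁.PosDef)
    (hsmall : opNorm Γ * opNorm Θ₁⁻¹ < 1) :
    kronQuadForm Θ₁ Γ ≤
      frobNorm Γ ^ 2 * opNorm Θ₁⁻¹ ^ 2 /
        (2 * (1 - opNorm Θ₁⁻¹ * opNorm Γ) ^ 2) := by
  simp only [opNorm_eq_l2_opNorm, frobNorm_eq_norm_toLp] at hsmall ⊢
  set x : Fin p × Fin p → ℝ := fun ij => Γ ij.1 ij.2
  have hq : ‖Θ₁⁻¹‖ * ‖Γ‖ < 1 := by linarith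
  have hinv (v : ℝ) (hv : v ∈ Set.Icc (0 : ℝ) 1) :
      ‖(Θ₁ + v • Γ)⁻¹‖ ≤ ‖Θ₁⁻¹‖ / (1 - ‖Θ₁⁻¹‖ * ‖Γ‖) :=
    Matrix.l2_opNorm_inv_add_smul_le Θ₁ Γ h₁.det_pos.ne'.isUnit hq
      (by rw [Real.norm_of_nonneg hv.1]; exact hv.2)
  calc kronQuadForm Θ₁ Γ ≤ (‖Θ₁⁻¹‖ / (1 - ‖Θ₁⁻¹‖ * ‖Γ‖)) ^ 2 * ‖toLp 2 x‖ ^ 2 / 2 := by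
        refine intervalIntegral_one_sub_mul_le (by positivity) fun v hv => ?_
        calc x ⬝ᵥ (((Θ₁ + v • Γ)⁻¹ ⊗ₖ (Θ₁ + v • Γ)⁻¹) *ᵥ x)
            ≤ ‖(Θ₁ + v • Γ)⁻¹ ⊗ₖ (Θ₁ + v • Γ)⁻¹‖ * ‖toLp 2 x‖ ^ 2 :=
              Matrix.dotProduct_mulVec_le_l2_opNorm_mul _ _
          _ ≤ ‖(Θ₁ + v • Γ)⁻¹‖ * ‖(Θ₁ + v • Γ)⁻¹‖ * ‖toLp 2 x‖ ^ 2 := by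
              gcongr; exact Matrix.l2_opNorm_kronecker_le _ _
          _ ≤ (‖Θ₁⁻¹‖ / (1 - ‖Θ₁⁻¹‖ * ‖Γ‖)) ^ 2 * ‖toLp 2 x‖ ^ 2 := by
              rw [← sq]; gcongr; exact hinv v hv
    _ = ‖toLp 2 x‖ ^ 2 * ‖Θ₁⁻¹‖ ^ 2 / (2 * (1 - ‖Θ₁⁻¹‖ * ‖Γ‖) ^ 2) := by
        field_simp

/-- Upper bound for the log-det Taylor remainder:
`A ≤ ‖Γ‖_F² ‖Θ₁⁻¹‖₂² / (2 (1 − ‖Θ₁⁻¹‖₂ ‖Γ‖₂)²)`. -/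
theorem stmt13 {p : ℕ} (Θ₁ Γ : Matrix (Fin p) (Fin p) ℝ)
    (h₁ : Θ₁.PosDef) (hΓ : Γ.IsHermitian)
    (hsmall : opNorm Γ * opNorm Θ₁⁻¹ < 1) :
    kronQuadForm Θ₁ Γ ≤
      frobNorm Γ ^ 2 * opNorm Θ₁⁻¹ ^ 2 /
        (2 * (1 - opNorm Θ₁⁻¹ * opNorm Γ) ^ 2) :=
  stmt13_general Θ₁ Γ h₁ hsmall
end
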